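/- arXiv:1202.3093 — 2 statements merged into one kernel-verified Lean document; each statement's English description precedes it below -/
import Mathlib

section
/- Goldbach's theorem: the series of the values of the Riemann zeta function at the integers n ≥ 2, each diminished by 1, sums to 1; that is, ∑_{n=2}^∞ (ζ(n) − 1) = 1. -/
/-!
Since `ζ(n) - 1 = ∑_{k ≥ 2} k⁻ⁿ` and all terms are positive, the order of summation may be
swapped; the inner geometric series give `∑_{n ≥ 2} k⁻ⁿ = 1 / (k - 1) - 1 / k`, which telescopes
to `1`.
-/

open Filter Topology

theorem Antitone.hasSum_sub_succ {f : ℕ → ℝ} (hf : Antitone f) (hf0 : Tendsto f atTop (𝓝 0)) :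
    HasSum (fun n => f n - f (n + 1)) (f 0) := by
  rw [hasSum_iff_tendsto_nat_of_nonneg fun n => sub_nonneg.2 (hf n.le_succ)]
  simp_rw [Finset.sum_range_sub']
  simpa using tendsto_const_nhds.sub hf0

theorem hasSum_one_div_succ_sub_one_div_succ_succ :
    HasSum (fun k : ℕ => (1 : ℝ) / (k + 1) - 1 / (k + 1 + 1)) 1 := by
  have hanti : Antitone fun k : ℕ => (1 : ℝ) / (k + 1) := fun a b hab =>
    one_div_le_one_div_of_le (by positivity) (by gcongr)
  simpa using hanti.hasSum_sub_succ tendsto_one_div_add_atTop_nhds_zero_nat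

theorem hasSum_one_div_add_one_pow_add_two {x : ℝ} (hx : 0 < x) :
    HasSum (fun n : ℕ => 1 / (x + 1) ^ (n + 2)) (1 / x - 1 / (x + 1)) := by
  have hr : 1 / (x + 1) < 1 := (div_lt_one (by positivity)).2 (by linarith)
  have hterm : (fun n : ℕ => 1 / (x + 1) ^ (n + 2)) =
      fun n => (1 / (x + 1)) ^ 2 * (1 / (x + 1)) ^ n := by
    ext n
    rw [← pow_add, one_div_pow, add_comm 2 n]
  have hval : 1 / x - 1 / (x + 1) = (1 / (x + 1)) ^ 2 * (1 - 1 / (x + 1))⁻¹ := by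
    rw [one_sub_div (by positivity), add_sub_cancel_right, inv_div]
    field_simp
    ring
  rw [hterm, hval]
  exact (hasSum_geometric_of_lt_one (by positivity) hr).mul_left _

theorem summable_one_div_succ_succ_pow_add_two :
    Summable fun p : ℕ × ℕ => (1 : ℝ) / (p.1 + 1 + 1) ^ (p.2 + 2) := by
  refine (summable_prod_of_nonneg fun _ => by positivity).2 ⟨fun k => ?_, ?_⟩
  · exact (hasSum_one_div_add_one_pow_add_two (by positivity : (0 : ℝ) < k + 1)).summable
  · refine hasSum_one_div_succ_sub_one_div_succ_succ.summable.congr fun k => ?_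
    exact ((hasSum_one_div_add_one_pow_add_two (by positivity : (0 : ℝ) < k + 1)).tsum_eq).symm

theorem tsum_one_div_succ_pow_sub_one {p : ℕ} (hp : 1 < p) :
    (∑' k : ℕ, (1 : ℝ) / (k + 1) ^ p) - 1 = ∑' k : ℕ, (1 : ℝ) / (k + 1 + 1) ^ p := by
  have hsum : Summable fun k : ℕ => (1 : ℝ) / (k + 1) ^ p := by
    simpa using (summable_nat_add_iff 1).2 (Real.summable_one_div_nat_pow.2 hp)
  rw [hsum.tsum_eq_zero_add]
  simp only [Nat.cast_zero, Nat.cast_succ, zero_add, one_pow, div_one, add_sub_cancel_left]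

/-- Goldbach's theorem: `∑_{n=2}^∞ (ζ(n) − 1) = 1`, where for real `s > 1`,
`ζ(s) = ∑_{k=1}^∞ k^(−s)`.  The outer sum is indexed by `n : ℕ` via `n ↦ n + 2`,
and the inner sum by `k : ℕ` via `k ↦ k + 1`. -/
theorem goldbach_zeta_sum :
    ∑' n : ℕ, ((∑' k : ℕ, (1 : ℝ) / (k + 1) ^ (n + 2)) - 1) = 1 := by
  calc ∑' n : ℕ, ((∑' k : ℕ, (1 : ℝ) / (k + 1) ^ (n + 2)) - 1)
      = ∑' (n : ℕ) (k : ℕ), (1 : ℝ) / (k + 1 + 1) ^ (n + 2) :=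
        tsum_congr fun n => tsum_one_div_succ_pow_sub_one (by omega : 1 < n + 2)
    _ = ∑' (k : ℕ) (n : ℕ), (1 : ℝ) / (k + 1 + 1) ^ (n + 2) :=
        Summable.tsum_comm (f := fun k n : ℕ => (1 : ℝ) / (k + 1 + 1) ^ (n + 2))
          summable_one_div_succ_succ_pow_add_two
    _ = ∑' k : ℕ, ((1 : ℝ) / (k + 1) - 1 / (k + 1 + 1)) :=
        tsum_congr fun k => (hasSum_one_div_add_one_pow_add_two (by positivity)).tsum_eq
    _ = 1 := hasSum_one_div_succ_sub_one_div_succ_succ.tsum_eq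
end

section
/- Kluyver's formula for Euler's constant: γ = ∑_{k=1}^∞ a_k / k, where a_k are Kluyver's numbers. -/
/-!
Writing `γ` as the limit of `H_n - log (n + 1)` gives
`γ = ∑_{n ≥ 0} ∫₀¹ x / ((n+1)(n+1+x)) dx`. For `0 ≤ x ≤ 1` and `y ≥ 1` the integrand has the
inverse factorial expansion `x / (y (y+x)) = ∑_{k ≥ 0} x (1-x)_k / (y)_{k+2}`, which telescopes.
All terms are nonnegative, so by Tonelli the sums over `n` and `k` and the integral may be
interchanged, and the inner sum `∑_n 1 / (n+1)_{k+2} = 1 / ((k+1) (k+1)!)` telescopes as well,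
leaving `∑_k (1 / ((k+1)(k+1)!)) ∫₀¹ x (1-x)_k dx = ∑_k a_{k+1} / (k+1)`.
-/

open MeasureTheory

/-- Kluyver's number `a_k = (1/k!) ∫₀¹ x (1−x)_{k−1} dx`, where
`(z)_n = ∏_{j=0}^{n-1} (z + j)` is the Pochhammer symbol. -/
noncomputable def kluyverA (k : ℕ) : ℝ :=
  (1 / (Nat.factorial k)) * ∫ x in (0:ℝ)..1, x * ∏ j ∈ Finset.range (k - 1), (1 - x + j)

open Filter Finset Polynomial Real Topology
open scoped ENNReal

theorem ascPochhammer_eval_eq_prod_range {R : Type*} [CommSemiring R] (n : ℕ) (r : R) :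
    (ascPochhammer R n).eval r = ∏ j ∈ range n, (r + j) := by
  induction n with
  | zero => simp
  | succ n ih => rw [ascPochhammer_succ_eval, ih, prod_range_succ]

section OrderedSemiring

variable {S : Type*} [Semiring S] [PartialOrder S] [IsOrderedRing S]

theorem pow_le_ascPochhammer_eval (n : ℕ) {s : S} (hs : 0 ≤ s) :
    s ^ n ≤ (ascPochhammer S n).eval s := by
  induction n with
  | zero => simp
  | succ n ih =>
    rw [pow_succ, ascPochhammer_succ_eval]
    exact mul_le_mul ih (le_add_of_nonneg_right n.cast_nonneg) hs ((pow_nonneg hs n).trans ih)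

theorem ascPochhammer_eval_nonneg (n : ℕ) {s : S} (hs : 0 ≤ s) :
    0 ≤ (ascPochhammer S n).eval s :=
  (pow_nonneg hs n).trans (pow_le_ascPochhammer_eval n hs)

theorem ascPochhammer_eval_le_eval (n : ℕ) {a b : S} (ha : 0 ≤ a) (hab : a ≤ b) :
    (ascPochhammer S n).eval a ≤ (ascPochhammer S n).eval b := by
  induction n with
  | zero => simp
  | succ n ih =>
    simp only [ascPochhammer_succ_eval]
    exact mul_le_mul ih (add_le_add_left hab _) (add_nonneg ha n.cast_nonneg)
      (ascPochhammer_eval_nonneg n (ha.trans hab))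

end OrderedSemiring

-- Over `ℝ` a convergent telescoping series need not be unconditionally summable; nonnegative
-- terms make it so.
theorem hasSum_of_eq_sub_succ {f g : ℕ → ℝ} {l : ℝ} (hg : ∀ n, 0 ≤ g n)
    (hfg : ∀ n, g n = f n - f (n + 1)) (hf : Tendsto f atTop (𝓝 l)) : HasSum g (f 0 - l) := by
  rw [hasSum_iff_tendsto_nat_of_nonneg hg]
  simp_rw [hfg, sum_range_sub']
  exact tendsto_const_nhds.sub hf

theorem HasSum.ofReal_eq_tsum {f : ℕ → ℝ} {a : ℝ} (h : HasSum f a) (hf : ∀ n, 0 ≤ f n) :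
    ENNReal.ofReal a = ∑' n, ENNReal.ofReal (f n) := by
  rw [← h.tsum_eq, ENNReal.ofReal_tsum_of_nonneg hf h.summable]

theorem tsum_lintegral_tsum_comm {α β γ : Type*} [MeasurableSpace α] [Countable β] [Countable γ]
    {μ : Measure α} {f : β → γ → α → ℝ≥0∞} (hf : ∀ b c, AEMeasurable (f b c) μ) :
    ∑' b, ∫⁻ x, ∑' c, f b c x ∂μ = ∑' c, ∫⁻ x, ∑' b, f b c x ∂μ := by
  simp_rw [lintegral_tsum (hf _), lintegral_tsum (fun b => hf b _)]
  exact ENNReal.tsum_comm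

theorem lintegral_Ioc_ofReal_eq_ofReal_intervalIntegral {f : ℝ → ℝ} {a b : ℝ} (hab : a ≤ b)
    (hf : IntervalIntegrable f volume a b) (hf₀ : ∀ x ∈ Set.Ioc a b, 0 ≤ f x) :
    ∫⁻ x in Set.Ioc a b, ENNReal.ofReal (f x) = ENNReal.ofReal (∫ x in a..b, f x) := by
  rw [intervalIntegral.integral_of_le hab, ofReal_integral_eq_lintegral_ofReal
    ((intervalIntegrable_iff_integrableOn_Ioc_of_le hab).mp hf)
    ((ae_restrict_iff' measurableSet_Ioc).mpr (ae_of_all _ hf₀))]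

theorem hasSum_one_div_ascPochhammer_eval_nat_add {z : ℝ} (hz : 0 < z) {m : ℕ} (hm : m ≠ 0) :
    HasSum (fun n : ℕ => 1 / (ascPochhammer ℝ (m + 1)).eval (n + z))
      (1 / (m * (ascPochhammer ℝ m).eval z)) := by
  have htop : Tendsto (fun n : ℕ => m * (ascPochhammer ℝ m).eval (n + z)) atTop atTop := by
    refine Tendsto.const_mul_atTop (by positivity) (tendsto_atTop_mono
      (fun n => pow_le_ascPochhammer_eval m (by positivity)) ?_)
    exact (tendsto_pow_atTop hm).comp
      (tendsto_atTop_add_const_right _ z tendsto_natCast_atTop_atTop)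
  have h := hasSum_of_eq_sub_succ (f := fun n : ℕ => 1 / (m * (ascPochhammer ℝ m).eval (n + z)))
    (g := fun n : ℕ => 1 / (ascPochhammer ℝ (m + 1)).eval (n + z))
    (fun n => (one_div_pos.mpr (ascPochhammer_pos _ _ (by positivity))).le) ?_
    (by simpa only [one_div, Function.comp_def] using tendsto_inv_atTop_zero.comp htop)
  · simpa using h
  intro n
  set w : ℝ := n + z
  have hw : 0 < w := by positivity
  -- `(w)_{m+1} = (w)_m (w + m) = w (w + 1)_m`
  have hright := ascPochhammer_succ_eval m w
  have hleft : (ascPochhammer ℝ (m + 1)).eval w = w * (ascPochhammer ℝ m).eval (w + 1) := by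
    simp [ascPochhammer_succ_left]
  have := ascPochhammer_pos m w hw
  have := ascPochhammer_pos m (w + 1) (by positivity)
  have := ascPochhammer_pos (m + 1) w hw
  rw [show ((n + 1 : ℕ) : ℝ) + z = w + 1 by push_cast; ring]
  field_simp
  linear_combination (-(ascPochhammer ℝ m).eval (w + 1)) * hright +
    (ascPochhammer ℝ m).eval w * hleft

theorem integral_div_mul_add {y : ℝ} (hy : 0 < y) :
    ∫ x in (0 : ℝ)..1, x / (y * (y + x)) = 1 / y - log ((y + 1) / y) := by
  have hpf : ∀ x ∈ Set.uIcc (0 : ℝ) 1, x / (y * (y + x)) = 1 / y - (y + x)⁻¹ := by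
    intro x hx
    rw [Set.uIcc_of_le zero_le_one] at hx
    have : 0 < y + x := by linarith [hx.1]
    field_simp
    ring
  have hint : IntervalIntegrable (fun x => (y + x)⁻¹) volume 0 1 := by
    refine ContinuousOn.intervalIntegrable (ContinuousOn.inv₀ (by fun_prop) fun x hx => ?_)
    rw [Set.uIcc_of_le zero_le_one] at hx
    linarith [hx.1]
  rw [intervalIntegral.integral_congr hpf,
    intervalIntegral.integral_sub intervalIntegrable_const hint,
    intervalIntegral.integral_comp_add_left (fun x => x⁻¹),
    integral_inv_of_pos (by simpa) (by linarith)]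
  simp

theorem mul_ascPochhammer_div_le_one_div {x y : ℝ} (hx₀ : 0 ≤ x) (hx₁ : x ≤ 1) (hy : 1 ≤ y)
    (k : ℕ) :
    x * (ascPochhammer ℝ k).eval (1 - x) / ((y + x) * (ascPochhammer ℝ (k + 1)).eval y) ≤
      1 / ((k : ℝ) + 1) := by
  have h1 : x * (ascPochhammer ℝ k).eval (1 - x) ≤ 1 * (ascPochhammer ℝ k).eval 1 :=
    mul_le_mul hx₁ (ascPochhammer_eval_le_eval k (by linarith) (by linarith))
      (ascPochhammer_eval_nonneg k (by linarith)) zero_le_one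
  have h2 : 1 * (ascPochhammer ℝ (k + 1)).eval 1 ≤ (y + x) * (ascPochhammer ℝ (k + 1)).eval y :=
    mul_le_mul (by linarith) (ascPochhammer_eval_le_eval _ zero_le_one hy)
      (ascPochhammer_eval_nonneg _ zero_le_one) (by linarith)
  have hpos := ascPochhammer_pos k (1 : ℝ) one_pos
  calc _ ≤ 1 * (ascPochhammer ℝ k).eval 1 / (1 * (ascPochhammer ℝ (k + 1)).eval 1) :=
        div_le_div₀ (by linarith) h1 (by rw [one_mul]; exact ascPochhammer_pos _ _ one_pos) h2
    _ = 1 / ((k : ℝ) + 1) := by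
        rw [ascPochhammer_succ_eval, one_mul, one_mul, div_mul_cancel_left₀ hpos.ne', add_comm,
          one_div]

theorem hasSum_inverse_factorial_series {x y : ℝ} (hx₀ : 0 ≤ x) (hx₁ : x ≤ 1) (hy : 1 ≤ y) :
    HasSum (fun k : ℕ => x * (ascPochhammer ℝ k).eval (1 - x) / (ascPochhammer ℝ (k + 2)).eval y)
      (x / (y * (y + x))) := by
  have hP : ∀ k, 0 < (ascPochhammer ℝ k).eval y := fun k => ascPochhammer_pos k y (by linarith)
  have hQ : ∀ k, 0 ≤ (ascPochhammer ℝ k).eval (1 - x) :=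
    fun k => ascPochhammer_eval_nonneg k (by linarith)
  have hyx : 0 < y + x := by linarith
  -- `f k - f (k + 1)` is the `k`-th term since `(y + k + 1) - (1 - x + k) = y + x`.
  set f : ℕ → ℝ := fun k =>
    x * (ascPochhammer ℝ k).eval (1 - x) / ((y + x) * (ascPochhammer ℝ (k + 1)).eval y)
  have hf₀ : ∀ k, 0 ≤ f k := fun k => by have := hP (k + 1); have := hQ k; positivity
  have h := hasSum_of_eq_sub_succ (f := f) (l := 0)
    (g := fun k : ℕ => x * (ascPochhammer ℝ k).eval (1 - x) / (ascPochhammer ℝ (k + 2)).eval y)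
    (fun k => by have := hP (k + 2); have := hQ k; positivity) ?_
    (squeeze_zero hf₀ (mul_ascPochhammer_div_le_one_div hx₀ hx₁ hy)
      tendsto_one_div_add_atTop_nhds_zero_nat)
  · convert h using 1
    simp only [f, ascPochhammer_zero, ascPochhammer_one, eval_one, eval_X, mul_one, zero_add,
      sub_zero]
    ring
  intro k
  simp only [f, ascPochhammer_succ_eval (k + 1), ascPochhammer_succ_eval k (1 - x)]
  have := hP (k + 1)
  field_simp
  push_cast
  ring

theorem hasSum_integral_div_mul_add :
    HasSum (fun n : ℕ => ∫ x in (0 : ℝ)..1, x / (((n : ℝ) + 1) * ((n : ℝ) + 1 + x)))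
      eulerMascheroniConstant := by
  have h := hasSum_of_eq_sub_succ (f := fun n : ℕ => log ((n : ℝ) + 1) - harmonic n)
    (g := fun n : ℕ => ∫ x in (0 : ℝ)..1, x / (((n : ℝ) + 1) * ((n : ℝ) + 1 + x)))
    (fun n => intervalIntegral.integral_nonneg zero_le_one fun x hx => by have := hx.1; positivity)
    (fun n => ?_) (by simpa using tendsto_harmonic_sub_log_add_one.neg)
  · simpa using h
  rw [integral_div_mul_add (by positivity), log_div (by positivity) (by positivity), harmonic_succ]
  push_cast
  ring

noncomputable def kluyverTerm (k n : ℕ) (x : ℝ) : ℝ :=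
  x * (ascPochhammer ℝ k).eval (1 - x) / (ascPochhammer ℝ (k + 2)).eval ((n : ℝ) + 1)

theorem continuous_kluyverTerm (k n : ℕ) : Continuous (kluyverTerm k n) := by
  unfold kluyverTerm
  fun_prop

theorem kluyverTerm_nonneg (k n : ℕ) {x : ℝ} (hx₀ : 0 ≤ x) (hx₁ : x ≤ 1) :
    0 ≤ kluyverTerm k n x :=
  div_nonneg (mul_nonneg hx₀ (ascPochhammer_eval_nonneg k (by linarith)))
    (ascPochhammer_eval_nonneg _ (by positivity))

theorem hasSum_kluyverTerm_over_k (n : ℕ) {x : ℝ} (hx₀ : 0 ≤ x) (hx₁ : x ≤ 1) :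
    HasSum (fun k => kluyverTerm k n x) (x / (((n : ℝ) + 1) * ((n : ℝ) + 1 + x))) :=
  hasSum_inverse_factorial_series hx₀ hx₁ (by simp)

theorem hasSum_kluyverTerm_over_n (k : ℕ) (x : ℝ) :
    HasSum (fun n => kluyverTerm k n x)
      (x * (ascPochhammer ℝ k).eval (1 - x) / (((k : ℝ) + 1) * (k + 1).factorial)) := by
  have h := (hasSum_one_div_ascPochhammer_eval_nat_add one_pos (m := k + 1) (by omega)).mul_left
    (x * (ascPochhammer ℝ k).eval (1 - x))
  rw [← ascPochhammer_eval_one]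
  simpa only [kluyverTerm, mul_one_div, Nat.cast_add_one] using h

theorem kluyverA_succ_div_eq_integral (k : ℕ) :
    kluyverA (k + 1) / (k + 1) = ∫ x in (0 : ℝ)..1,
      x * (ascPochhammer ℝ k).eval (1 - x) / (((k : ℝ) + 1) * (k + 1).factorial) := by
  simp_rw [kluyverA, Nat.add_sub_cancel, ← ascPochhammer_eval_eq_prod_range,
    intervalIntegral.integral_div]
  field_simp

theorem kluyverA_succ_div_nonneg (k : ℕ) : 0 ≤ kluyverA (k + 1) / (k + 1) := by
  rw [kluyverA_succ_div_eq_integral]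
  refine intervalIntegral.integral_nonneg zero_le_one fun x hx => ?_
  exact div_nonneg (mul_nonneg hx.1 (ascPochhammer_eval_nonneg k (sub_nonneg.mpr hx.2)))
    (by positivity)

theorem ofReal_eulerMascheroniConstant_eq_tsum_lintegral :
    ENNReal.ofReal eulerMascheroniConstant =
      ∑' n, ∫⁻ x in Set.Ioc 0 1, ∑' k, ENNReal.ofReal (kluyverTerm k n x) := by
  have hpos : ∀ n : ℕ, ∀ x ∈ Set.Icc (0 : ℝ) 1, 0 ≤ x / (((n : ℝ) + 1) * ((n : ℝ) + 1 + x)) :=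
    fun n x hx => by have := hx.1; positivity
  rw [hasSum_integral_div_mul_add.ofReal_eq_tsum fun n =>
    intervalIntegral.integral_nonneg zero_le_one (hpos n)]
  refine tsum_congr fun n => ?_
  rw [← lintegral_Ioc_ofReal_eq_ofReal_intervalIntegral zero_le_one ?_
    fun x hx => hpos n x (Set.Ioc_subset_Icc_self hx)]
  · refine setLIntegral_congr_fun measurableSet_Ioc fun x hx => ?_
    exact (hasSum_kluyverTerm_over_k n hx.1.le hx.2).ofReal_eq_tsum
      fun k => kluyverTerm_nonneg k n hx.1.le hx.2
  · refine ContinuousOn.intervalIntegrable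
      (ContinuousOn.div continuousOn_id (by fun_prop) fun x hx => ?_)
    rw [Set.uIcc_of_le zero_le_one] at hx
    have := hx.1
    positivity

theorem lintegral_tsum_kluyverTerm (k : ℕ) :
    ∫⁻ x in Set.Ioc 0 1, ∑' n, ENNReal.ofReal (kluyverTerm k n x) =
      ENNReal.ofReal (kluyverA (k + 1) / (k + 1)) := by
  rw [kluyverA_succ_div_eq_integral,
    ← lintegral_Ioc_ofReal_eq_ofReal_intervalIntegral zero_le_one ?_ ?_]
  · refine setLIntegral_congr_fun measurableSet_Ioc fun x hx => ?_
    exact ((hasSum_kluyverTerm_over_n k x).ofReal_eq_tsum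
        fun n => kluyverTerm_nonneg k n hx.1.le hx.2).symm
  · exact (by fun_prop : Continuous _).intervalIntegrable _ _
  · exact fun x hx => div_nonneg (mul_nonneg hx.1.le (ascPochhammer_eval_nonneg k
      (sub_nonneg.mpr hx.2))) (by positivity)

/-- Kluyver's formula for Euler's constant: `γ = ∑_{k=1}^∞ a_k / k`. -/
theorem kluyver_formula :
    Real.eulerMascheroniConstant = ∑' k : ℕ, kluyverA (k + 1) / (k + 1) := by
  have key : ENNReal.ofReal eulerMascheroniConstant =
      ∑' k : ℕ, ENNReal.ofReal (kluyverA (k + 1) / (k + 1)) := by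
    rw [ofReal_eulerMascheroniConstant_eq_tsum_lintegral,
      tsum_lintegral_tsum_comm (f := fun n k x => ENNReal.ofReal (kluyverTerm k n x))
        fun n k => (continuous_kluyverTerm k n).measurable.ennreal_ofReal.aemeasurable]
    exact tsum_congr lintegral_tsum_kluyverTerm
  have hγ : 0 ≤ eulerMascheroniConstant :=
    one_half_pos.le.trans one_half_lt_eulerMascheroniConstant.le
  rw [← ENNReal.toReal_ofReal hγ, key, ENNReal.tsum_toReal_eq fun _ => ENNReal.ofReal_ne_top]
  exact tsum_congr fun k => ENNReal.toReal_ofReal (kluyverA_succ_div_nonneg k)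
end
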